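/- Let (X,d,α) be a computable metric space which is locally computable, and let S be a co-c.e. closed set in (X,d,α) which is compact. Then S is a semi-computable compact set in (X,d,α). -/

import Mathlib

open Metric Set

namespace CMS

/-- A function `f : α → ℝ` (on a `Primcodable` type of codes) is computable if some
computable `F : α → ℕ → ℚ` approximates it with precision `2 ^ (-i)`. -/
def ComputableReal {α : Type*} [Primcodable α] (f : α → ℝ) : Prop :=
  ∃ F : α → ℕ → ℚ, Computable₂ F ∧ ∀ x i, |f x - (F x i : ℝ)| < (2 : ℝ) ^ (-(i : ℤ))

/-- `(X, d, α)` is a computable metric space: `α` has dense range and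
`(i,j) ↦ d (α i) (α j)` is computable. -/
structure IsComputableMetric {X : Type*} [MetricSpace X] (α : ℕ → X) : Prop where
  dense : DenseRange α
  dist_computable : ComputableReal (fun p : ℕ × ℕ => dist (α p.1) (α p.2))

variable {X : Type*} [MetricSpace X]

/-- The open ball denoted by the rational ball code `c = (i, q)`. -/
def ratBall (α : ℕ → X) (c : ℕ × ℚ) : Set X := Metric.ball (α c.1) (c.2 : ℝ)

/-- The rational open set denoted by a rational open set code (a list of ball codes). -/
def ratOpen (α : ℕ → X) (L : List (ℕ × ℚ)) : Set X := ⋃ c ∈ L, ratBall α c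

/-- A valid rational open set code: a nonempty list of ball codes with positive radii. -/
def ValidCode (L : List (ℕ × ℚ)) : Prop := L ≠ [] ∧ ∀ c ∈ L, 0 < c.2

/-- `K` is a semi-computable compact set: `K` is compact and the set of rational
open set codes whose denoted set contains `K` is c.e. -/
def SemiComputableCompact (α : ℕ → X) (K : Set X) : Prop :=
  IsCompact K ∧ REPred (fun L : List (ℕ × ℚ) => ValidCode L ∧ K ⊆ ratOpen α L)

/-- `S` is a c.e. closed set: `S` is closed and the set of rational ball codes whose
denoted ball meets `S` is c.e. -/
def CeClosed (α : ℕ → X) (S : Set X) : Prop :=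
  IsClosed S ∧ REPred (fun c : ℕ × ℚ => 0 < c.2 ∧ (ratBall α c ∩ S).Nonempty)

/-- `S` is a co-c.e. closed set: `S` is closed and there is a computable sequence of
rational ball codes whose denoted balls have union `X \ S`. -/
def CoCeClosed (α : ℕ → X) (S : Set X) : Prop :=
  IsClosed S ∧ ∃ f : ℕ → ℕ × ℚ, Computable f ∧ (∀ k, 0 < (f k).2) ∧
    Sᶜ = ⋃ k, ratBall α (f k)

/-- A computable compact set: semi-computable compact and c.e. closed. -/
def ComputableCompact (α : ℕ → X) (K : Set X) : Prop :=
  SemiComputableCompact α K ∧ CeClosed α K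

/-- A computable closed set: c.e. closed and co-c.e. closed. -/
def ComputableClosed (α : ℕ → X) (S : Set X) : Prop :=
  CeClosed α S ∧ CoCeClosed α S

/-- `(X, d, α)` is locally computable: each compact set is contained in a computable
compact set. -/
def LocallyComputable (α : ℕ → X) : Prop :=
  ∀ A : Set X, IsCompact A → ∃ K : Set X, ComputableCompact α K ∧ A ⊆ K

/-- The half-space `ℍⁿ = {x ∈ ℝⁿ | xₙ ≥ 0}` (the condition is on the last coordinate). -/
def halfSpace (n : ℕ) : Set (Fin n → ℝ) :=
  {x | ∀ i : Fin n, (i : ℕ) = n - 1 → 0 ≤ x i}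

/-- `Bd ℍⁿ = {x ∈ ℍⁿ | xₙ = 0}`. -/
def bdHalfSpace (n : ℕ) : Set (Fin n → ℝ) :=
  {x | ∀ i : Fin n, (i : ℕ) = n - 1 → x i = 0}

/-- `U` is an open subset of the half-space `ℍⁿ` (in the subspace topology). -/
def IsOpenInHalfSpace (n : ℕ) (U : Set (Fin n → ℝ)) : Prop :=
  U ⊆ halfSpace n ∧ ∃ V : Set (Fin n → ℝ), IsOpen V ∧ U = V ∩ halfSpace n

/-- `M` is an `n`-manifold with boundary: `M` is nonempty and every point has a
neighborhood homeomorphic to an open subset of `ℍⁿ`. -/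
def IsManifoldWithBoundaryOfDim (n : ℕ) (M : Type*) [TopologicalSpace M] : Prop :=
  Nonempty M ∧ ∀ x : M, ∃ N : Set M, N ∈ nhds x ∧
    ∃ U : Set (Fin n → ℝ), IsOpenInHalfSpace n U ∧ Nonempty (↥N ≃ₜ ↥U)

/-- The boundary `∂M` of an `n`-manifold with boundary: points having a neighborhood
homeomorphic to an open subset of `ℍⁿ` by a homeomorphism sending the point into `Bd ℍⁿ`. -/
def manifoldBoundary (n : ℕ) (M : Type*) [TopologicalSpace M] : Set M :=
  {x | ∃ N : Set M, N ∈ nhds x ∧ ∃ U : Set (Fin n → ℝ), IsOpenInHalfSpace n U ∧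
    ∃ (h : ↥N ≃ₜ ↥U) (hx : x ∈ N), ((h ⟨x, hx⟩ : ↥U) : Fin n → ℝ) ∈ bdHalfSpace n}

/-- `M` is an `n`-manifold (without boundary): `M` is nonempty and every point has a
neighborhood homeomorphic to `ℝⁿ`. -/
def IsManifoldOfDim (n : ℕ) (M : Type*) [TopologicalSpace M] : Prop :=
  Nonempty M ∧ ∀ x : M, ∃ N : Set M, N ∈ nhds x ∧ Nonempty (↥N ≃ₜ (Fin n → ℝ))

/-- `A ≺_ε B` : every point of `A` is within distance `< ε` of some point of `B`. -/
def Prec (ε : ℝ) (A B : Set X) : Prop := ∀ a ∈ A, ∃ b ∈ B, dist a b < ε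

/-- The finite set of rational points denoted by a finite-point code (a list of naturals). -/
def finPts (α : ℕ → X) (L : List ℕ) : Set X := {x | ∃ l ∈ L, α l = x}

/-- `A` is computable up to `B`: a computable function produces, for each `k`, a
finite-point code with denoted set `Λ_k` such that `A ≺_{2^{-k}} Λ_k` and `Λ_k ≺_{2^{-k}} B`. -/
def ComputableUpTo (α : ℕ → X) (A B : Set X) : Prop :=
  ∃ f : ℕ → List ℕ, Computable f ∧ ∀ k : ℕ, f k ≠ [] ∧
    Prec ((2 : ℝ) ^ (-(k : ℤ))) A (finPts α (f k)) ∧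
    Prec ((2 : ℝ) ^ (-(k : ℤ))) (finPts α (f k)) B

end CMS

/-!
By local computability `S` lies in a semi-computable compact set `K`. A rational open set `U`
contains `S` exactly when `U`, together with finitely many of the enumerated balls exhausting
`X ∖ S`, covers `K` (compactness of `K`); so the codes of such `U` form an existential
projection of the c.e. set of codes of covers of `K`.
-/

section Computability

variable {α β : Type*} [Primcodable α] [Primcodable β]

theorem Computable.list_map_range {f : ℕ → β} (hf : Computable f) :
    Computable fun n => (List.range n).map f := by
  refine (Computable.nat_rec Computable.id (Computable.const [])
    (Computable.list_concat.comp (Computable.snd.comp Computable.snd)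
      (hf.comp (Computable.fst.comp Computable.snd))).to₂).of_eq fun n => ?_
  induction n with
  | zero => rfl
  | succ n ih => rw [List.range_succ, List.map_append, ← ih]; rfl

theorem REPred.comp {p : β → Prop} (hp : REPred p) {g : α → β} (hg : Computable g) :
    REPred fun a => p (g a) :=
  Partrec.comp hp hg

theorem REPred.and_computablePred {p q : α → Prop} (hp : ComputablePred p) (hq : REPred q) :
    REPred fun a => p a ∧ q a := by
  obtain ⟨_, hp⟩ := hp
  refine (Partrec.cond hp hq Partrec.none).dom_re.of_eq fun a => ?_
  by_cases h : p a <;> simp [h, Part.assert]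

theorem REPred.exists_nat {p : α → ℕ → Prop} (hp : REPred fun q : α × ℕ => p q.1 q.2) :
    REPred fun a => ∃ n, p a n := by
  obtain ⟨c, hc⟩ := Nat.Partrec.Code.exists_code.1 hp
  have hdom : ∀ a n, p a n ↔ (c.eval (Encodable.encode (a, n))).Dom := by
    simp [hc, Encodable.encodek, Part.assert]
  -- dovetail the witness `n` with the number of evaluation steps
  have hsearch : Computable₂ fun (a : α) (m : ℕ) =>
      Nat.Partrec.Code.evaln m.unpair.2 c (Encodable.encode (a, m.unpair.1)) :=
    (Nat.Partrec.Code.primrec_evaln.comp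
      (((Primrec.snd.comp (Primrec.unpair.comp Primrec.snd)).pair (Primrec.const c)).pair
        (Primrec.encode.comp (Primrec.fst.pair
          (Primrec.fst.comp (Primrec.unpair.comp Primrec.snd)))))).to_comp.to₂
  refine (Partrec.rfindOpt hsearch).dom_re.of_eq fun a => ?_
  rw [Nat.rfindOpt_dom]
  constructor
  · rintro ⟨m, y, hy⟩
    exact ⟨m.unpair.1, (hdom _ _).2 (Part.dom_iff_mem.2
      ⟨y, Nat.Partrec.Code.evaln_complete.2 ⟨_, hy⟩⟩)⟩
  · rintro ⟨n, hn⟩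
    obtain ⟨y, hy⟩ := Part.dom_iff_mem.1 ((hdom _ _).1 hn)
    obtain ⟨k, hk⟩ := Nat.Partrec.Code.evaln_complete.1 hy
    exact ⟨Nat.pair n k, y, by simpa using hk⟩

end Computability

theorem IsCompact.subset_iff_exists_subset_union_biUnion_lt {X : Type*} [TopologicalSpace X]
    {K S U : Set X} (hK : IsCompact K) (hSK : S ⊆ K) (hU : IsOpen U) {B : ℕ → Set X}
    (hB : ∀ k, IsOpen (B k)) (hSB : Sᶜ = ⋃ k, B k) :
    S ⊆ U ↔ ∃ n, K ⊆ U ∪ ⋃ k < n, B k := by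
  constructor
  · intro hSU
    refine hK.elim_directed_cover _ (fun n => hU.union (isOpen_biUnion fun k _ => hB k))
      (fun x _ => ?_) (Monotone.directed_le fun m n hmn => ?_)
    · by_cases hx : x ∈ S
      · exact mem_iUnion.2 ⟨0, Or.inl (hSU hx)⟩
      · obtain ⟨k, hk⟩ := mem_iUnion.1 (hSB ▸ hx : x ∈ ⋃ k, B k)
        exact mem_iUnion.2 ⟨k + 1, Or.inr (mem_biUnion (Nat.lt_succ_self k) hk)⟩
    · exact union_subset_union_right _
        (biUnion_subset_biUnion_left fun k hk => lt_of_lt_of_le hk hmn)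
  · rintro ⟨n, hn⟩ x hx
    refine (hn (hSK hx)).resolve_right fun hxB => ?_
    obtain ⟨k, -, hk⟩ := mem_iUnion₂.1 hxB
    exact (hSB ▸ mem_iUnion.2 ⟨k, hk⟩ : x ∈ Sᶜ) hx

namespace CMS

variable {X : Type*} [MetricSpace X] (α : ℕ → X)

theorem isOpen_ratOpen (L : List (ℕ × ℚ)) : IsOpen (ratOpen α L) :=
  isOpen_biUnion fun _ _ => isOpen_ball

theorem ratOpen_append (L M : List (ℕ × ℚ)) :
    ratOpen α (L ++ M) = ratOpen α L ∪ ratOpen α M := by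
  simp [ratOpen, iUnion_or, iUnion_union_distrib]

theorem ratOpen_map_range (f : ℕ → ℕ × ℚ) (n : ℕ) :
    ratOpen α ((List.range n).map f) = ⋃ k < n, ratBall α (f k) := by
  simp [ratOpen]

theorem validCode_append_iff {L M : List (ℕ × ℚ)} (hL : L ≠ []) (hM : ∀ c ∈ M, 0 < c.2) :
    ValidCode (L ++ M) ↔ ValidCode L := by
  simp only [ValidCode, ne_eq, List.append_eq_nil_iff, hL, false_and, not_false_eq_true,
    List.mem_append, or_imp, forall_and, true_and]
  exact and_iff_left hM

end CMS

open CMS in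
theorem stmt_8_general {X : Type} [MetricSpace X] (α : ℕ → X)
    (hloc : LocallyComputable α)
    (S : Set X) (hS : CoCeClosed α S) (hcomp : IsCompact S) :
    SemiComputableCompact α S := by
  obtain ⟨-, f, hf, hfpos, hSf⟩ := hS
  obtain ⟨K, ⟨⟨hK, hKre⟩, -⟩, hSK⟩ := hloc S hcomp
  let extend (L : List (ℕ × ℚ)) (n : ℕ) : List (ℕ × ℚ) := L ++ (List.range n).map f
  have hextend : Computable₂ extend :=
    Computable.list_append.comp Computable.fst
      ((Computable.list_map_range hf).comp Computable.snd)
  have hne : ComputablePred fun L : List (ℕ × ℚ) => L ≠ [] :=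
    (Primrec.eq.comp Primrec.id (Primrec.const [])).not.computablePred
  refine ⟨hcomp, (REPred.and_computablePred hne
    (REPred.exists_nat (p := fun L n => ValidCode (extend L n) ∧ K ⊆ ratOpen α (extend L n))
      (hKre.comp hextend))).of_eq fun L => ?_⟩
  by_cases hL : L = []
  · simp [hL, ValidCode]
  have hfL : ∀ n, ∀ c ∈ (List.range n).map f, 0 < c.2 := by simp [hfpos]
  rw [hK.subset_iff_exists_subset_union_biUnion_lt hSK (isOpen_ratOpen α L)
    (fun k => isOpen_ball) hSf]
  simp only [extend, validCode_append_iff hL (hfL _), ratOpen_append, ratOpen_map_range]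
  exact ⟨fun ⟨_, n, hLv, hn⟩ => ⟨hLv, n, hn⟩, fun ⟨hLv, n, hn⟩ => ⟨hL, n, hLv, hn⟩⟩

open CMS in
/-- In a locally computable computable metric space, every compact
co-c.e. closed set is a semi-computable compact set. -/
theorem stmt_8 {X : Type} [MetricSpace X] (α : ℕ → X) (hα : IsComputableMetric α)
    (hloc : LocallyComputable α)
    (S : Set X) (hS : CoCeClosed α S) (hcomp : IsCompact S) :
    SemiComputableCompact α S :=
  stmt_8_general α hloc S hS hcomp
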